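/- arXiv:2309.15384 — 2 statements merged into one kernel-verified Lean document; each statement's English description precedes it below -/
import Mathlib

section
/- Fix integers with 0 ≤ r < k ≤ n, r < m < n, n−m+r ≥ k, and α ∈ {0,…,n−1}. Define f_0 : ℤ → ℤ by f_0(i) = r+i for 1 ≤ i ≤ m−r, f_0(i) = k+i for m−r < i ≤ n−k+r, f_0(i) = i+m+k−r for n−k+r < i ≤ n, extended by f_0(i+n) = f_0(i)+n for all i ∈ ℤ, and set f_α(i) := f_0(i−α)+α. Then {i ∈ [n] : f_α(i) > n} equals: [n−k+1, n] if 0 ≤ α ≤ n−m−(k−r); [n−m−(k−r)+1, α] ∪ [m−r+α+1, n] if n−m−(k−r) ≤ α ≤ n−m; [α−(k−r)+1, α] ∪ [n−r+1, n] if n−m ≤ α ≤ n−r; and [n−k+1, n] if n−r ≤ α ≤ n−1. -/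
namespace Positroid

/-- The bounded affine permutation `f_0` of the interval positroid variety `X_{[m] ≤ r}`:
on `[1, n]` it is `f_0(i) = r + i` for `1 ≤ i ≤ m - r`, `f_0(i) = k + i` for
`m - r < i ≤ n - k + r`, `f_0(i) = i + m + k - r` for `n - k + r < i ≤ n`, extended by
`f_0(i + n) = f_0(i) + n`. -/
def f0 (n k m r : ℕ) (i : ℤ) : ℤ :=
  (if (i - 1) % n + 1 ≤ (m : ℤ) - r then (r : ℤ) + ((i - 1) % n + 1)
   else if (i - 1) % n + 1 ≤ (n : ℤ) - k + r then (k : ℤ) + ((i - 1) % n + 1)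
   else ((i - 1) % n + 1) + m + k - r) + ((i - 1) / n) * n

/-- The cyclically shifted bounded affine permutation `f_α(i) = f_0(i - α) + α`. -/
def fshift (n k m r α : ℕ) (i : ℤ) : ℤ := f0 n k m r (i - α) + α

/-- equation `eqn:May11bbb` in the proof of Proposition `prop:uv`.
The set `I_α = {i ∈ [n] : f_α(i) > n}` equals `[n-k+1, n]` if `α ≤ n-m-(k-r)`;
`[n-m-(k-r)+1, α] ∪ [m-r+α+1, n]` if `n-m-(k-r) ≤ α ≤ n-m`;
`[α-(k-r)+1, α] ∪ [n-r+1, n]` if `n-m ≤ α ≤ n-r`; and `[n-k+1, n]` if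
`n-r ≤ α ≤ n-1`. -/
theorem statement12 (n k m r α : ℕ) (hrk : r < k) (hkn : k ≤ n) (hrm : r < m)
    (hmn : m < n) (hnmr : k + m ≤ n + r) (hα : α ≤ n - 1) :
    ((α : ℤ) ≤ (n : ℤ) - m - ((k : ℤ) - r) →
      (Finset.Icc (1 : ℤ) n).filter (fun i => (n : ℤ) < fshift n k m r α i) =
        Finset.Icc ((n : ℤ) - k + 1) n) ∧
    ((n : ℤ) - m - ((k : ℤ) - r) ≤ α → (α : ℤ) ≤ (n : ℤ) - m →
      (Finset.Icc (1 : ℤ) n).filter (fun i => (n : ℤ) < fshift n k m r α i) =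
        Finset.Icc ((n : ℤ) - m - ((k : ℤ) - r) + 1) (α : ℤ) ∪
          Finset.Icc ((m : ℤ) - r + α + 1) n) ∧
    ((n : ℤ) - m ≤ α → (α : ℤ) ≤ (n : ℤ) - r →
      (Finset.Icc (1 : ℤ) n).filter (fun i => (n : ℤ) < fshift n k m r α i) =
        Finset.Icc ((α : ℤ) - ((k : ℤ) - r) + 1) (α : ℤ) ∪
          Finset.Icc ((n : ℤ) - r + 1) n) ∧
    ((n : ℤ) - r ≤ α → (α : ℤ) ≤ (n : ℤ) - 1 →
      (Finset.Icc (1 : ℤ) n).filter (fun i => (n : ℤ) < fshift n k m r α i) =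
        Finset.Icc ((n : ℤ) - k + 1) n) := by
  have hn : (0:ℤ) < n := by omega
  have key : ∀ i : ℤ, 1 ≤ i → i ≤ n →
      ((n : ℤ) < fshift n k m r α i ↔
        (if (α:ℤ) < i then
          (if i - α ≤ (m:ℤ) - r then (n:ℤ) < r + (i - α) + α
           else if i - α ≤ (n:ℤ) - k + r then (n:ℤ) < k + (i - α) + α
           else (n:ℤ) < (i - α) + m + k - r + α)
        else
          (if i - α + n ≤ (m:ℤ) - r then (n:ℤ) < r + (i - α + n) - n + α
           else if i - α + n ≤ (n:ℤ) - k + r then (n:ℤ) < k + (i - α + n) - n + α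
           else (n:ℤ) < (i - α + n) + m + k - r - n + α))) := by
    intro i h1 h2
    unfold fshift f0
    by_cases hiα : (α:ℤ) < i
    · have he : (i - α - 1) % n = i - α - 1 := Int.emod_eq_of_lt (by omega) (by omega)
      have hd : (i - α - 1) / n = 0 := Int.ediv_eq_zero_of_lt (by omega) (by omega)
      rw [he, hd]
      simp only [hiα, if_true]
      split_ifs <;> omega
    · have he0 : (i - α - 1 + n) % n = i - α - 1 + n :=
        Int.emod_eq_of_lt (by omega) (by omega)
      have he : (i - α - 1) % n = i - α - 1 + n := by
        have := Int.add_mul_emod_self_left (a := i - α - 1) (b := n) (c := 1)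
        rw [mul_one] at this
        omega
      have hd0 : (i - α - 1 + n) / n = 0 := Int.ediv_eq_zero_of_lt (by omega) (by omega)
      have hd : (i - α - 1) / n = -1 := by
        have := Int.add_mul_ediv_right (i - α - 1) 1 (show (n:ℤ) ≠ 0 by omega)
        rw [one_mul] at this
        omega
      rw [he, hd]
      simp only [hiα, if_false]
      split_ifs <;> omega
  refine ⟨fun hA => ?_, fun hA hB => ?_, fun hA hB => ?_, fun hA hB => ?_⟩ <;>
  · ext i
    simp only [Finset.mem_filter, Finset.mem_Icc, Finset.mem_union]
    constructor
    · rintro ⟨⟨h1, h2⟩, h3⟩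
      rw [key i h1 h2] at h3
      split_ifs at h3 <;> omega
    · intro h
      have h1 : 1 ≤ i := by omega
      have h2 : i ≤ (n:ℤ) := by omega
      refine ⟨⟨h1, h2⟩, ?_⟩
      rw [key i h1 h2]
      split_ifs <;> omega


end Positroid
end

section
/- Let A be a commutative ring and M a k×n matrix over A. For a k-tuple (e_1, …, e_k) of elements of [n], let Δ(e_1,…,e_k) denote the determinant of the k×k matrix whose i-th column is column e_i of M. Then for all tuples (c_1,…,c_k), (d_1,…,d_k) ∈ [n]^k and every 1 ≤ j ≤ k: Δ(c_1,…,c_k)·Δ(d_1,…,d_k) = Σ_{1 ≤ i_1 < ⋯ < i_{k−j} ≤ k} Δ(c_1,…,c_j, d_{i_1},…,d_{i_{k−j}})·Δ(d'), where d' is the k-tuple obtained from (d_1,…,d_k) by replacing the entries in positions i_1,…,i_{k−j} by c_{j+1},…,c_k (in this order). -/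
/-!
Exchanging one column at a time: by Cramer's rule, `Δ(E) Δ(F) = Σ_i Δ(E') Δ(F')`, where column
`q` of `E` and column `i` of `F` are swapped in `E'`, `F'`. Iterating this over `t = k - j`
columns naturally produces a sum over *ordered* choices `φ` of the positions in `d`, and the
identity proved by induction on `t` is `t! Δ(c) Δ(d) = Σ_φ (term of φ)`: when the new column of
`c` is exchanged with a column of `d'` that already holds an entry of `c`, the terms add up to the
statement for `c` with two entries transposed, i.e. to `-t · t! Δ(c) Δ(d)`. Reordering `φ` changes
both determinants of its term by the same sign, so every unordered choice is counted `t!` times.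
Dividing by `t!` is legitimate in the polynomial ring `ℤ[M_ip]`, and the identity for an
arbitrary commutative ring follows by specialization.
-/

open scoped BigOperators

namespace Positroid

/-- `colDet M e` is `Δ(e_1, …, e_k)`: the determinant of the `k × k` matrix whose `i`-th
column is column `e_i` of `M`. -/
def colDet {A : Type*} [CommRing A] {k n : ℕ} (M : Matrix (Fin k) (Fin n) A)
    (e : Fin k → Fin n) : A :=
  (Matrix.of fun i p : Fin k => M i (e p)).det

/-- The tuple `(c_1, …, c_j, d_{i_1}, …, d_{i_{k-j}})`, where `i_1 < ⋯ < i_{k-j}` are the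
elements of `T`. -/
def selTuple (k j : ℕ) {n : ℕ} (c d : Fin k → Fin n) (T : Finset (Fin k))
    (hT : T.card = k - j) : Fin k → Fin n :=
  fun p =>
    if h : (p : ℕ) < j then c p
    else d (T.orderIsoOfFin hT ⟨(p : ℕ) - j, by have := p.isLt; omega⟩)

/-- The tuple obtained from `(d_1, …, d_k)` by replacing the entries in positions
`i_1 < ⋯ < i_{k-j}` (the elements of `T`) by `c_{j+1}, …, c_k`, in this order. -/
def replTuple (k j : ℕ) (hj : j ≤ k) {n : ℕ} (c d : Fin k → Fin n) (T : Finset (Fin k))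
    (hT : T.card = k - j) : Fin k → Fin n :=
  fun p =>
    if h : p ∈ T then
      c ⟨j + (((T.orderIsoOfFin hT).symm ⟨p, h⟩ : Fin (k - j)) : ℕ),
        by have := ((T.orderIsoOfFin hT).symm ⟨p, h⟩).isLt; omega⟩
    else d p

open Function

section Extend

variable {ι α γ : Type*}

theorem extend_cons_cons [DecidableEq α] {t : ℕ} {p : Fin t → α} {a : α}
    (hp : Injective (Fin.cons a p)) (g : Fin t → γ) (b : γ) (e : α → γ) :
    extend (Fin.cons a p) (Fin.cons b g) e = update (extend p g e) a b := by
  have hp' := (Fin.cons_injective_iff.mp hp).2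
  funext z
  rcases eq_or_ne z a with rfl | hz
  · simpa using hp.extend_apply (Fin.cons b g) e 0
  rw [update_of_ne hz]
  by_cases hr : ∃ s, p s = z
  · obtain ⟨s, rfl⟩ := hr
    simpa [hp'.extend_apply] using hp.extend_apply (Fin.cons b g) e s.succ
  · rw [extend_apply' _ _ _ hr, extend_apply']
    rintro ⟨u, rfl⟩
    cases u using Fin.cases with
    | zero => exact hz rfl
    | succ u => exact hr ⟨u, rfl⟩

theorem update_extend_apply_self [DecidableEq ι] [DecidableEq α] {φ : ι → α}
    (hφ : Injective φ) (h : ι → γ) (f : α → γ) (s : ι) (v : γ) :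
    update (extend φ h f) (φ s) v = extend φ (update h s v) f := by
  funext z
  by_cases hr : ∃ u, φ u = z
  · obtain ⟨u, rfl⟩ := hr
    rcases eq_or_ne u s with rfl | hus
    · simp [hφ.extend_apply]
    · rw [update_of_ne (hφ.ne hus), hφ.extend_apply, hφ.extend_apply, update_of_ne hus]
  · rw [update_of_ne fun h => hr ⟨s, h.symm⟩, extend_apply' _ _ _ hr, extend_apply' _ _ _ hr]

theorem update_extend_apply_eq_extend_comp_swap [DecidableEq α] {p : ι → α} (hp : Injective p)
    {a : α} (ha : a ∉ Set.range p) (s : ι) (g : ι → γ) (e : α → γ) :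
    update (extend p g e) a (e (p s)) = extend p g (e ∘ Equiv.swap a (p s)) := by
  funext z
  rcases eq_or_ne z a with rfl | hz
  · rw [update_self, extend_apply' _ _ _ ha, comp_apply, Equiv.swap_apply_left]
  rw [update_of_ne hz]
  by_cases hr : ∃ u, p u = z
  · obtain ⟨u, rfl⟩ := hr
    rw [hp.extend_apply, hp.extend_apply]
  · rw [extend_apply' _ _ _ hr, extend_apply' _ _ _ hr, comp_apply,
      Equiv.swap_apply_of_ne_of_ne hz fun h => hr ⟨s, h.symm⟩]

theorem update_comp_eq_comp_swap_comp [DecidableEq ι] [DecidableEq α] {p : ι → α}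
    (hp : Injective p) {a : α} (ha : a ∉ Set.range p) (e : α → γ) (s : ι) :
    update (e ∘ p) s (e a) = e ∘ Equiv.swap a (p s) ∘ p := by
  funext u
  rcases eq_or_ne u s with rfl | hus
  · simp
  · rw [update_of_ne hus, comp_apply, comp_apply, comp_apply,
      Equiv.swap_apply_of_ne_of_ne (fun h => ha ⟨u, h⟩) (hp.ne hus)]

theorem extend_comp_equiv {φ : ι → α} (hφ : Injective φ) (π : ι ≃ ι) (h : ι → γ)
    (f : α → γ) : extend (φ ∘ π) h f = extend φ (h ∘ π.symm) f := by
  funext z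
  by_cases hr : ∃ u, φ u = z
  · obtain ⟨u, rfl⟩ := hr
    have hu : φ u = (φ ∘ π) (π.symm u) := by simp
    rw [hu, (hφ.comp π.injective).extend_apply, ← hu, hφ.extend_apply, comp_apply]
  · rw [extend_apply' _ _ _ hr, extend_apply' (f := φ ∘ π) _ _ _ fun ⟨u, hu⟩ => hr ⟨π u, hu⟩]

end Extend

theorem sum_embedding_eq_factorial_smul_sum {α B : Type*} [Fintype α] [LinearOrder α]
    [AddCommMonoid B] {t : ℕ} (F : (Fin t ↪ α) → B)
    (hF : ∀ φ (π : Equiv.Perm (Fin t)), F (π.toEmbedding.trans φ) = F φ) :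
    ∑ φ, F φ =
      t.factorial • ∑ T : {T : Finset α // T.card = t}, F (T.1.orderEmbOfFin T.2).toEmbedding := by
  let Φ (x : {T : Finset α // T.card = t} × Equiv.Perm (Fin t)) : Fin t ↪ α :=
    x.2.toEmbedding.trans (x.1.1.orderEmbOfFin x.1.2).toEmbedding
  have hinj : Injective Φ := by
    rintro ⟨⟨T, hT⟩, π⟩ ⟨⟨T', hT'⟩, π'⟩ h
    have hrange := congrArg Set.range (congrArg DFunLike.coe h)
    simp only [Φ, Embedding.coe_trans, Equiv.coe_toEmbedding, EquivLike.range_comp,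
      RelEmbedding.coe_toEmbedding, Finset.range_orderEmbOfFin, Finset.coe_inj] at hrange
    subst hrange
    exact Prod.ext rfl (Equiv.ext fun s => (T.orderEmbOfFin hT).injective (DFunLike.congr_fun h s))
  -- both sides have `(card α).choose t * t!` elements
  have hbij : Bijective Φ := (Fintype.bijective_iff_injective_and_card Φ).mpr
    ⟨hinj, by simp [Fintype.card_embedding_eq, Fintype.card_perm,
      Nat.descFactorial_eq_factorial_mul_choose, mul_comm]⟩
  rw [← hbij.sum_comp, Fintype.sum_prod_type, Finset.smul_sum]
  refine Fintype.sum_congr _ _ fun T => ?_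
  calc ∑ π, F (Φ (T, π)) = ∑ _π : Equiv.Perm (Fin t), F (T.1.orderEmbOfFin T.2).toEmbedding :=
        Fintype.sum_congr _ _ fun π => hF _ π
    _ = _ := by rw [Finset.sum_const, Finset.card_univ, Fintype.card_perm, Fintype.card_fin]

theorem det_mul_det_eq_sum_det_updateCol {A m : Type*} [CommRing A] [Fintype m] [DecidableEq m]
    (E F : Matrix m m A) (q : m) :
    E.det * F.det =
      ∑ i, (E.updateCol q fun r => F r i).det * (F.updateCol i fun r => E r q).det := by
  let L : (m → A) →ₗ[A] A :=
    { toFun := fun v => (E.updateCol q v).det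
      map_add' := E.det_updateCol_add q
      map_smul' := E.det_updateCol_smul q }
  set b : m → A := fun r => E r q
  calc E.det * F.det = L (F.det • b) := by
        simp [L, b, Matrix.updateCol_eq_self, mul_comm]
    _ = L (∑ i, F.cramer b i • fun r => F r i) := by
        rw [← Matrix.mulVec_cramer]
        congr 1
        ext r
        simp [Matrix.mulVec, dotProduct, mul_comm]
    _ = _ := by simp [L, Matrix.cramer_apply, mul_comm]

section ColDet

variable {A : Type*} [CommRing A] {k n t : ℕ} (M : Matrix (Fin k) (Fin n) A)

theorem colDet_update (e : Fin k → Fin n) (q : Fin k) (x : Fin n) :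
    colDet M (update e q x) =
      ((Matrix.of fun i p => M i (e p)).updateCol q fun r => M r x).det := by
  unfold colDet
  congr 1
  ext r p
  by_cases h : p = q <;> simp [update_apply, h]

theorem colDet_mul_colDet_eq_sum_update (e f : Fin k → Fin n) (q : Fin k) :
    colDet M e * colDet M f =
      ∑ i, colDet M (update e q (f i)) * colDet M (update f i (e q)) := by
  simp only [colDet_update]
  exact det_mul_det_eq_sum_det_updateCol _ _ q

theorem colDet_comp_perm (e : Fin k → Fin n) (σ : Equiv.Perm (Fin k)) :
    colDet M (e ∘ σ) = σ.sign * colDet M e :=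
  Matrix.det_permute' σ (Matrix.of fun i p => M i (e p))

theorem colDet_comp_swap (e : Fin k → Fin n) {a b : Fin k} (hab : a ≠ b) :
    colDet M (e ∘ Equiv.swap a b) = -colDet M e := by
  rw [colDet_comp_perm, Equiv.Perm.sign_swap hab]
  simp

theorem colDet_extend_comp_perm {p : Fin t → Fin k} (hp : Injective p) (g : Fin t → Fin n)
    (e : Fin k → Fin n) (π : Equiv.Perm (Fin t)) :
    colDet M (extend p (g ∘ π) e) = π.sign * colDet M (extend p g e) := by
  classical
  have h : extend p (g ∘ π) e = extend p g e ∘ π.extendDomain (Equiv.ofInjective p hp) := by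
    funext z
    by_cases hr : ∃ u, p u = z
    · obtain ⟨u, rfl⟩ := hr
      have := π.extendDomain_apply_image (Equiv.ofInjective p hp) u
      simp only [Equiv.ofInjective_apply] at this
      rw [comp_apply, this, hp.extend_apply, hp.extend_apply, comp_apply]
    · rw [comp_apply, π.extendDomain_apply_not_subtype _ (by simpa using hr),
        extend_apply' _ _ _ hr, extend_apply' _ _ _ hr]
  rw [h, colDet_comp_perm, Equiv.Perm.sign_extendDomain]

theorem map_colDet {B : Type*} [CommRing B] (f : A →+* B) (e : Fin k → Fin n) :
    f (colDet M e) = colDet (M.map f) e :=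
  f.map_det _

/-- The product of the determinants of `e` and `f` after exchanging `e (p s)` with `f (φ s)` for
every `s`. -/
noncomputable def exchangeTerm (p φ : Fin t ↪ Fin k) (e f : Fin k → Fin n) : A :=
  colDet M (extend p (f ∘ φ) e) * colDet M (extend φ (e ∘ p) f)

theorem exchangeTerm_comp_perm (p φ : Fin t ↪ Fin k) (e f : Fin k → Fin n)
    (π : Equiv.Perm (Fin t)) :
    exchangeTerm M p (π.toEmbedding.trans φ) e f = exchangeTerm M p φ e f := by
  have h₁ : extend p (f ∘ π.toEmbedding.trans φ) e = extend p ((f ∘ φ) ∘ π) e := rfl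
  have h₂ : extend (π.toEmbedding.trans φ) (e ∘ p) f = extend φ ((e ∘ p) ∘ π.symm) f :=
    extend_comp_equiv φ.injective π _ _
  rw [exchangeTerm, exchangeTerm, h₁, h₂, colDet_extend_comp_perm M p.injective,
    colDet_extend_comp_perm M φ.injective, Equiv.Perm.sign_symm, mul_mul_mul_comm,
    ← Int.cast_mul, ← Units.val_mul, Int.units_mul_self, Units.val_one, Int.cast_one, one_mul]

theorem exchangeTerm_eq_sum_cons_add_sum_swap (p' φ' : Fin t ↪ Fin k) {a : Fin k}
    (ha : a ∉ Set.range p') (e f : Fin k → Fin n) :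
    exchangeTerm M p' φ' e f =
      ∑ i : {i // i ∉ Set.range φ'},
          exchangeTerm M ((Equiv.embeddingFinSucc t (Fin k)).symm ⟨p', a, ha⟩)
            ((Equiv.embeddingFinSucc t (Fin k)).symm ⟨φ', i⟩) e f +
        ∑ s, exchangeTerm M p' φ' (e ∘ Equiv.swap a (p' s)) f := by
  classical
  rw [exchangeTerm, colDet_mul_colDet_eq_sum_update M _ _ a,
    ← Finset.sum_compl_add_sum (Finset.univ.map φ'), Finset.sum_map]
  congr 1
  · rw [Finset.sum_subtype _ (p := (· ∉ Set.range φ')) fun i => by simp]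
    refine Fintype.sum_congr _ _ fun ⟨i, hi⟩ => ?_
    simp only [exchangeTerm, Equiv.coe_embeddingFinSucc_symm, Fin.comp_cons]
    rw [extend_cons_cons (Fin.cons_injective_iff.mpr ⟨ha, p'.injective⟩),
      extend_cons_cons (Fin.cons_injective_iff.mpr ⟨hi, φ'.injective⟩),
      extend_apply' _ _ _ (by simpa using hi), extend_apply' _ _ _ (by simpa using ha)]
  · refine Fintype.sum_congr _ _ fun s => ?_
    simp only [exchangeTerm]
    rw [φ'.injective.extend_apply, comp_apply,
      update_extend_apply_eq_extend_comp_swap p'.injective ha,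
      extend_apply' _ _ _ (by simpa using ha), update_extend_apply_self φ'.injective,
      update_comp_eq_comp_swap_comp p'.injective ha]
    rfl

theorem factorial_mul_colDet_mul_colDet_eq_sum_exchangeTerm (p : Fin t ↪ Fin k)
    (e f : Fin k → Fin n) :
    (t.factorial : A) * (colDet M e * colDet M f) =
      ∑ φ : Fin t ↪ Fin k, exchangeTerm M p φ e f := by
  induction t generalizing e with
  | zero =>
    have h (φ : Fin 0 → Fin k) (g : Fin 0 → Fin n) (e : Fin k → Fin n) : extend φ g e = e :=
      funext fun z => extend_apply' _ _ _ fun ⟨u, _⟩ => u.elim0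
    simp [exchangeTerm, h]
  | succ t ih =>
    obtain ⟨⟨p', a, ha⟩, rfl⟩ := (Equiv.embeddingFinSucc t (Fin k)).symm.surjective p
    have hswap (s : Fin t) : colDet M (e ∘ Equiv.swap a (p' s)) = -colDet M e :=
      colDet_comp_swap M e fun h => ha ⟨s, h.symm⟩
    have key := ih p' e
    rw [Finset.sum_congr rfl fun φ' _ => exchangeTerm_eq_sum_cons_add_sum_swap M p' φ' ha e f,
      Finset.sum_add_distrib, Finset.sum_comm (s := Finset.univ (α := Fin t ↪ Fin k))] at key
    simp only [← ih, hswap, Finset.sum_const, Finset.card_univ, Fintype.card_fin,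
      nsmul_eq_mul] at key
    rw [← (Equiv.embeddingFinSucc t (Fin k)).symm.sum_comp, Fintype.sum_sigma,
      Nat.factorial_succ, Nat.cast_mul, Nat.cast_succ]
    linear_combination key

/-- The positions of `c_{j+1}, …, c_k` in a `k`-tuple, counted from `0`. -/
def shiftEmb (k j : ℕ) : Fin (k - j) ↪ Fin k :=
  ⟨fun s => ⟨j + s, by omega⟩, fun a b h => Fin.ext (by simpa using h)⟩

@[simp]
theorem val_shiftEmb (j : ℕ) (s : Fin (k - j)) : (shiftEmb k j s : ℕ) = j + s := rfl

theorem selTuple_eq_extend (j : ℕ) (c d : Fin k → Fin n) (T : Finset (Fin k))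
    (hT : T.card = k - j) :
    selTuple k j c d T hT = extend (shiftEmb k j) (d ∘ T.orderEmbOfFin hT) c := by
  funext p
  unfold selTuple
  split_ifs with h
  · rw [extend_apply']
    rintro ⟨s, hs⟩
    simp only [Fin.ext_iff, val_shiftEmb] at hs
    omega
  · have hp : p = shiftEmb k j ⟨p - j, by omega⟩ := Fin.ext (by simp; omega)
    conv_rhs => rw [hp]
    rw [(shiftEmb k j).injective.extend_apply, comp_apply, Finset.coe_orderIsoOfFin_apply]

theorem replTuple_eq_extend (j : ℕ) (hj : j ≤ k) (c d : Fin k → Fin n) (T : Finset (Fin k))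
    (hT : T.card = k - j) :
    replTuple k j hj c d T hT = extend (T.orderEmbOfFin hT) (c ∘ shiftEmb k j) d := by
  funext p
  unfold replTuple
  split_ifs with h
  · have hp : p = T.orderEmbOfFin hT ((T.orderIsoOfFin hT).symm ⟨p, h⟩) := by
      simp [← Finset.coe_orderIsoOfFin_apply]
    conv_rhs => rw [hp]
    rw [(T.orderEmbOfFin hT).injective.extend_apply, comp_apply]
    rfl
  · rw [extend_apply']
    rintro ⟨s, rfl⟩
    exact h (T.orderEmbOfFin_mem hT s)

theorem colDet_mul_colDet_eq_sum_selTuple_replTuple_of_charZero [IsDomain A] [CharZero A]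
    (c d : Fin k → Fin n) (j : ℕ) (hjk : j ≤ k) :
    colDet M c * colDet M d =
      ∑ T : {T : Finset (Fin k) // T.card = k - j},
        colDet M (selTuple k j c d T.1 T.2) * colDet M (replTuple k j hjk c d T.1 T.2) := by
  have key := factorial_mul_colDet_mul_colDet_eq_sum_exchangeTerm M (shiftEmb k j) c d
  rw [sum_embedding_eq_factorial_smul_sum _ (exchangeTerm_comp_perm M _ · c d), nsmul_eq_mul]
    at key
  simp only [selTuple_eq_extend, replTuple_eq_extend]
  exact mul_left_cancel₀ (Nat.cast_ne_zero.mpr (Nat.factorial_ne_zero _)) key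

end ColDet

theorem statement19_general (A : Type*) [CommRing A] (k n : ℕ) (M : Matrix (Fin k) (Fin n) A)
    (c d : Fin k → Fin n) (j : ℕ) (hjk : j ≤ k) :
    colDet M c * colDet M d =
      ∑ T : {T : Finset (Fin k) // T.card = k - j},
        colDet M (selTuple k j c d T.1 T.2) *
          colDet M (replTuple k j hjk c d T.1 T.2) := by
  have h := congrArg (MvPolynomial.eval₂Hom (Int.castRingHom A) fun q => M q.1 q.2)
    (colDet_mul_colDet_eq_sum_selTuple_replTuple_of_charZero
      (Matrix.mvPolynomialX (Fin k) (Fin n) ℤ) c d j hjk)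
  simpa only [map_mul, map_sum, map_colDet, MvPolynomial.coe_eval₂Hom,
    Matrix.mvPolynomialX_map_eval₂] using h

/-- Lemma `lem: unsigned-plucker-relation`.
For any commutative ring `A`, any `k × n` matrix `M` over `A`, any tuples
`c, d ∈ [n]^k` and any `1 ≤ j ≤ k`:
`Δ(c)·Δ(d) = Σ_{1 ≤ i_1 < ⋯ < i_{k-j} ≤ k} Δ(c_1,…,c_j,d_{i_1},…,d_{i_{k-j}})·Δ(d')`,
where `d'` replaces the entries of `d` in positions `i_1, …, i_{k-j}` by
`c_{j+1}, …, c_k`. -/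
theorem statement19 (A : Type*) [CommRing A] (k n : ℕ) (M : Matrix (Fin k) (Fin n) A)
    (c d : Fin k → Fin n) (j : ℕ) (hj1 : 1 ≤ j) (hjk : j ≤ k) :
    colDet M c * colDet M d =
      ∑ T : {T : Finset (Fin k) // T.card = k - j},
        colDet M (selTuple k j c d T.1 T.2) *
          colDet M (replTuple k j hjk c d T.1 T.2) :=
  statement19_general A k n M c d j hjk

end Positroid
end
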